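/- For every positive integer n, the identity Σ_{a,b≥0, a+b=n} C(2n,2a) B_{2a}(1/2) B_{2b}(1/2) = -(2n-1) B_{2n} holds, where B_m(x) are Bernoulli polynomials and B_m are Bernoulli numbers. -/

import Mathlib

/-! With `F_x(t) = Σ B_k(x) t^k/k! = t e^{xt}/(e^t - 1)` and `G(t) = t/(e^t - 1)`, one has
`F_x F_{1-x} = t² e^t/(e^t - 1)² = G - t G'`; comparing `t^m`-coefficients gives
`Σ C(m,k) B_k(x) B_{m-k}(1-x) = (1 - m) B_m`. At `x = 1/2`, `m = 2n` the odd-index terms drop out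
because `B_k(1 - x) = (-1)^k B_k(x)` forces `B_k(1/2) = 0` for odd `k`. -/

open Finset Nat PowerSeries

theorem PowerSeries.exp_sub_one_ne_zero (A : Type*) [Ring A] [Algebra ℚ A] [Nontrivial A] :
    exp A - 1 ≠ 0 := by
  intro h
  simpa [coeff_exp] using congrArg (coeff 1) h

theorem bernoulliPowerSeries_sub_X_mul_derivative_mul_exp_sub_one_sq (A : Type*) [CommRing A]
    [Algebra ℚ A] :
    (bernoulliPowerSeries A - X * d⁄dX A (bernoulliPowerSeries A)) * (exp A - 1) ^ 2 =
      X ^ 2 * exp A := by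
  have hB := bernoulliPowerSeries_mul_exp_sub_one A
  have hB' : d⁄dX A (bernoulliPowerSeries A) * (exp A - 1) +
      bernoulliPowerSeries A * exp A = 1 := by
    simpa [derivative_exp, add_comm, mul_comm] using congrArg (d⁄dX A) hB
  linear_combination (exp A - 1 + X * exp A) * hB - X * (exp A - 1) * hB'

noncomputable def bernoulliEvalPowerSeries (x : ℚ) : ℚ⟦X⟧ :=
  mk fun n => (Polynomial.bernoulli n).eval x / n !

theorem bernoulliEvalPowerSeries_mul_exp_sub_one (x : ℚ) :
    bernoulliEvalPowerSeries x * (exp ℚ - 1) = X * rescale x (exp ℚ) := by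
  convert Polynomial.bernoulli_generating_function x using 3
  simp [bernoulliEvalPowerSeries, Polynomial.aeval_def, div_eq_inv_mul]

theorem bernoulliEvalPowerSeries_mul_bernoulliEvalPowerSeries_one_sub (x : ℚ) :
    bernoulliEvalPowerSeries x * bernoulliEvalPowerSeries (1 - x) =
      bernoulliPowerSeries ℚ - X * d⁄dX ℚ (bernoulliPowerSeries ℚ) := by
  refine mul_right_cancel₀ (pow_ne_zero 2 (exp_sub_one_ne_zero ℚ)) ?_
  rw [bernoulliPowerSeries_sub_X_mul_derivative_mul_exp_sub_one_sq]
  calc bernoulliEvalPowerSeries x * bernoulliEvalPowerSeries (1 - x) * (exp ℚ - 1) ^ 2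
      = X * rescale x (exp ℚ) * (X * rescale (1 - x) (exp ℚ)) := by
        rw [← bernoulliEvalPowerSeries_mul_exp_sub_one, ← bernoulliEvalPowerSeries_mul_exp_sub_one]
        ring
    _ = X ^ 2 * exp ℚ := by
        rw [mul_mul_mul_comm, exp_mul_exp_eq_exp_add, add_sub_cancel, rescale_one, sq]
        rfl

theorem coeff_X_mul_derivative {R : Type*} [CommSemiring R] (f : R⟦X⟧) (n : ℕ) :
    coeff n (X * d⁄dX R f) = n * coeff n f := by
  cases n with
  | zero => simp
  | succ n => rw [coeff_succ_X_mul, coeff_derivative, mul_comm, Nat.cast_succ]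

theorem sum_range_choose_mul_bernoulli_eval_mul_bernoulli_eval_one_sub (x : ℚ) (m : ℕ) :
    ∑ k ∈ range (m + 1), (m.choose k : ℚ) * (Polynomial.bernoulli k).eval x *
        (Polynomial.bernoulli (m - k)).eval (1 - x) =
      (1 - m) * bernoulli m := by
  have h := congrArg (coeff m) (bernoulliEvalPowerSeries_mul_bernoulliEvalPowerSeries_one_sub x)
  rw [coeff_mul, Nat.sum_antidiagonal_eq_sum_range_succ_mk, map_sub, coeff_X_mul_derivative] at h
  simp only [bernoulliEvalPowerSeries, bernoulliPowerSeries, coeff_mk,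
    Algebra.algebraMap_self, RingHom.id_apply] at h
  calc _ = ∑ k ∈ range (m + 1), (Polynomial.bernoulli k).eval x / k ! *
          ((Polynomial.bernoulli (m - k)).eval (1 - x) / (m - k)!) * m ! := by
        refine sum_congr rfl fun k hk => ?_
        rw [Nat.cast_choose ℚ (Nat.lt_succ_iff.mp (mem_range.mp hk))]
        ring
    _ = (1 - m) * bernoulli m := by
        rw [← sum_mul, h]
        field_simp

theorem Polynomial.bernoulli_eval_one_half_of_odd {n : ℕ} (hn : Odd n) :
    (bernoulli n).eval (1 / 2 : ℚ) = 0 := by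
  have h := bernoulli_eval_one_sub n (1 / 2)
  rw [hn.neg_one_pow] at h
  norm_num at h
  linarith

theorem Finset.sum_range_two_mul_add_one_of_odd_eq_zero {M : Type*} [AddCommMonoid M] {f : ℕ → M}
    (hf : ∀ k, Odd k → f k = 0) (n : ℕ) :
    ∑ k ∈ range (2 * n + 1), f k = ∑ a ∈ range (n + 1), f (2 * a) := by
  induction n with
  | zero => simp
  | succ n ih =>
    rw [show 2 * (n + 1) + 1 = 2 * n + 1 + 1 + 1 by ring, sum_range_succ, sum_range_succ, ih,
      hf _ (odd_two_mul_add_one n), add_zero, sum_range_succ (n := n + 1), mul_add_one]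

theorem bernoulli_half_convolution_general (n : ℕ) :
    ∑ a ∈ Finset.range (n + 1),
        ((2 * n).choose (2 * a) : ℚ) * (Polynomial.bernoulli (2 * a)).eval (1 / 2) *
          (Polynomial.bernoulli (2 * (n - a))).eval (1 / 2) =
      -(2 * (n : ℚ) - 1) * bernoulli (2 * n) := by
  have h := sum_range_choose_mul_bernoulli_eval_mul_bernoulli_eval_one_sub (1 / 2) (2 * n)
  rw [Finset.sum_range_two_mul_add_one_of_odd_eq_zero ?_ n] at h
  · norm_num [← Nat.mul_sub] at h
    rw [h]
    ring
  · intro k hk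
    rw [Polynomial.bernoulli_eval_one_half_of_odd hk, mul_zero, zero_mul]

/-- `Σ_{a+b=n, a,b ≥ 0} C(2n,2a) B_{2a}(1/2) B_{2b}(1/2) = -(2n-1) B_{2n}`. -/
theorem bernoulli_half_convolution (n : ℕ) (hn : 0 < n) :
    ∑ a ∈ Finset.range (n + 1),
        ((2 * n).choose (2 * a) : ℚ) * (Polynomial.bernoulli (2 * a)).eval (1 / 2) *
          (Polynomial.bernoulli (2 * (n - a))).eval (1 / 2) =
      -(2 * (n : ℚ) - 1) * bernoulli (2 * n) :=
  bernoulli_half_convolution_general n
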